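/- In any history H_to generated by the MVTO algorithm, if transaction T_k reads object x from committed transaction T_j, and T_i is any committed transaction that writes to x, then either i < j or k < i (exclusively); i.e., no committed writer of x has a timestamp strictly between j and k. -/

import Mathlib

/-! If `j < i < k`, compare the commit of `T_i` with the read of `x` by `T_k`. Had `T_i`
committed first, the read rule would have returned `T_i`'s version rather than `T_j`'s; had it
committed later, the commit rule would have aborted `T_i`. -/

/- A framework for software transactional memory histories, following
   the paper "multiversion timestamp ordering STM".  Transactions,
   objects and values are modelled as natural numbers; transaction
   identifiers coincide with their timestamps.  Values written by the
   transactions are assumed unique, so the reads-from relation is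
   determined by the events themselves. -/

/-- Transactional events. -/
inductive Event where
  | read   (t x v : ℕ) : Event
  | write  (t x v : ℕ) : Event
  | commit (t : ℕ) : Event
  | abort  (t : ℕ) : Event
deriving DecidableEq

/-- The transaction issuing an event. -/
def Event.txn : Event → ℕ
  | .read t _ _ => t
  | .write t _ _ => t
  | .commit t => t
  | .abort t => t

/-- A (sequential) history is a finite sequence of events. -/
abbrev History := List Event

/-- `e` occurs strictly before `f` in `H`. -/
def before (H : History) (e f : Event) : Prop :=
  ∃ i j : ℕ, i < j ∧ H[i]? = some e ∧ H[j]? = some f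

def committed (H : History) (t : ℕ) : Prop := Event.commit t ∈ H
def abortedTxn (H : History) (t : ℕ) : Prop := Event.abort t ∈ H
def started (H : History) (t : ℕ) : Prop := ∃ e ∈ H, e.txn = t
def terminated (H : History) (t : ℕ) : Prop := committed H t ∨ abortedTxn H t
def live (H : History) (t : ℕ) : Prop := started H t ∧ ¬ terminated H t
def writesTo (H : History) (t x : ℕ) : Prop := ∃ v, Event.write t x v ∈ H
def readOnly (H : History) (t : ℕ) : Prop := ∀ x v, Event.write t x v ∉ H

/-- `T_k` reads `x` (with value `v`) from the committed transaction `T_j`.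
    Since written values are unique, this is determined by the events. -/
def readsFrom (H : History) (j k x v : ℕ) : Prop :=
  Event.read k x v ∈ H ∧ Event.write j x v ∈ H ∧ committed H j

/-- A version order assigns, for every object `x`, an order on the
    versions `x_i` created by committed transactions:
    `VO x i j` means `x_i ≪ x_j`. -/
abbrev VersionOrder := ℕ → ℕ → ℕ → Prop

/-- `VO` is a (nonreflexive, transitive, total) order on the versions of each
    object created by committed transactions of `H`. -/
def IsVersionOrder (H : History) (VO : VersionOrder) : Prop :=
  (∀ x i j, VO x i j → committed H i ∧ committed H j ∧
      writesTo H i x ∧ writesTo H j x ∧ i ≠ j) ∧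
  (∀ x i, ¬ VO x i i) ∧
  (∀ x i j k, VO x i j → VO x j k → VO x i k) ∧
  (∀ x i j, committed H i → committed H j → writesTo H i x → writesTo H j x →
      i ≠ j → VO x i j ∨ VO x j i)

/-- Real-time edge: `T_i` commits before `T_j` starts (all of `T_j`'s events). -/
def rtEdge (H : History) (i j : ℕ) : Prop :=
  committed H i ∧ started H j ∧
    ∀ e ∈ H, e.txn = j → before H (Event.commit i) e

/-- Reads-from edge: `T_j` reads some object from `T_i`. -/
def rfEdge (H : History) (i j : ℕ) : Prop := ∃ x v, readsFrom H i j x v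

/-- Multiversion edges, relative to a version order:
    for each successful read `r_k(x,v)` reading the version created by the
    committed transaction `T_j`, and each (distinct) committed transaction `T_i`
    writing a different value `u` to `x`: an edge `T_i → T_j` if `x_i ≪ x_j`,
    and an edge `T_k → T_i` if `x_j ≪ x_i`. -/
def mvEdge (H : History) (VO : VersionOrder) (a b : ℕ) : Prop :=
  ∃ x v u j k i, readsFrom H j k x v ∧
    committed H i ∧ Event.write i x u ∈ H ∧ u ≠ v ∧ i ≠ j ∧ i ≠ k ∧
    ((VO x i j ∧ a = i ∧ b = j) ∨ (VO x j i ∧ a = k ∧ b = i))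

/-- Edges of the opacity graph `OPG(H, VO)`, with the real-time edges taken
    with respect to the history `Hrt`. -/
def opgEdgeRT (Hrt H : History) (VO : VersionOrder) (a b : ℕ) : Prop :=
  rtEdge Hrt a b ∨ rfEdge H a b ∨ mvEdge H VO a b

/-- Edges of the opacity graph `OPG(H, VO)`. -/
def opgEdge (H : History) (VO : VersionOrder) : ℕ → ℕ → Prop :=
  opgEdgeRT H H VO

/-- A directed graph (edge relation) on transactions is acyclic. -/
def Acyclic (E : ℕ → ℕ → Prop) : Prop := ∀ t, ¬ Relation.TransGen E t t

/-- `H` is t-sequential: no event of another transaction occurs between two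
    events of the same transaction. -/
def tSequential (H : History) : Prop :=
  ∀ e f g, e ∈ H → f ∈ H → g ∈ H → e.txn = g.txn → e.txn ≠ f.txn →
    ¬ (before H e f ∧ before H f g)

/-- `H` is legal: every successful read returns the value written by the
    last committed transaction writing `x` before it. -/
def legal (H : History) : Prop :=
  ∀ k x v, Event.read k x v ∈ H →
    ∃ j, Event.write j x v ∈ H ∧ committed H j ∧
      before H (Event.commit j) (Event.read k x v) ∧
      ∀ i u, Event.write i x u ∈ H → committed H i →
        before H (Event.commit i) (Event.read k x v) →
        i = j ∨ before H (Event.commit i) (Event.commit j)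

/-- `H` is valid: every successful read is preceded by the commit of a
    transaction writing that value to that object. -/
def validH (H : History) : Prop :=
  ∀ k x v, Event.read k x v ∈ H →
    ∃ j, Event.write j x v ∈ H ∧ before H (Event.commit j) (Event.read k x v)

/-- Two histories are equivalent if they have the same set of events. -/
def equivalentH (H H' : History) : Prop := ∀ e, e ∈ H ↔ e ∈ H'

/-- `Hb` is the completion of `H`: it extends `H` with abort events for
    precisely the incomplete (live) transactions of `H`. -/
def isCompletion (H Hb : History) : Prop :=
  ∃ L : List ℕ, Hb = H ++ L.map Event.abort ∧ L.Nodup ∧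
    (∀ t, t ∈ L ↔ live H t)

/-- `S` respects the (transaction-level) real-time order of `H`. -/
def respectsRT (H S : History) : Prop := ∀ i j, rtEdge H i j → rtEdge S i j

/-- Opacity: there is a legal t-sequential history equivalent to the
    completion of `H` that respects the real-time order of `H`. -/
def isOpaque (H : History) : Prop :=
  ∃ Hb S, isCompletion H Hb ∧ tSequential S ∧ legal S ∧
    equivalentH S Hb ∧ respectsRT H S

/-- The version order `≪_S` induced by a t-sequential history `S`:
    `x_i ≪_S x_j` iff the committed writers `T_i`, `T_j` of `x`
    satisfy `T_i <_S T_j`. -/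
def seqVO (S : History) : VersionOrder := fun x i j =>
  committed S i ∧ committed S j ∧ writesTo S i x ∧ writesTo S j x ∧ i ≠ j ∧
    before S (Event.commit i) (Event.commit j)

/-- The timestamp version order `≪_to`: versions are ordered by the
    timestamps of the committed transactions that created them. -/
def tsVO (H : History) : VersionOrder := fun x i j =>
  committed H i ∧ committed H j ∧ writesTo H i x ∧ writesTo H j x ∧ i < j

/-- `T_j` is the committed writer of `x` with the largest timestamp smaller
    than `l`. -/
def isLargestWriterBelow (H : History) (x l j : ℕ) : Prop :=
  committed H j ∧ writesTo H j x ∧ j < l ∧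
    ∀ m, committed H m → writesTo H m x → m < l → m ≤ j

/-- `T_k` is the committed writer of `x` with the smallest timestamp greater
    than `l`. -/
def isSmallestWriterAbove (H : History) (x l k : ℕ) : Prop :=
  committed H k ∧ writesTo H k x ∧ l < k ∧
    ∀ m, committed H m → writesTo H m x → l < m → k ≤ m

theorem before_or_before_of_ne {H : History} {e f : Event} (he : e ∈ H) (hf : f ∈ H)
    (hne : e ≠ f) : before H e f ∨ before H f e := by
  obtain ⟨a, ha⟩ := List.mem_iff_getElem?.mp he
  obtain ⟨b, hb⟩ := List.mem_iff_getElem?.mp hf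
  rcases lt_trichotomy a b with h | rfl | h
  · exact Or.inl ⟨a, b, h, ha, hb⟩
  · exact absurd (Option.some.inj (ha.symm.trans hb)) hne
  · exact Or.inr ⟨b, a, h, hb, ha⟩

def MVTOReadRule (H : History) : Prop :=
  ∀ j k x v, readsFrom H j k x v →
    j < k ∧ before H (Event.commit j) (Event.read k x v) ∧
      ∀ i, committed H i → writesTo H i x →
        before H (Event.commit i) (Event.read k x v) → i < k → i ≤ j

def MVTOCommitRule (H : History) : Prop :=
  ∀ i x, committed H i → writesTo H i x →
    ∀ j k v, readsFrom H j k x v →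
      before H (Event.read k x v) (Event.commit i) → ¬ (j < i ∧ i < k)

theorem MVTOReadRule.lt {H : History} (hR : MVTOReadRule H) {j k x v : ℕ}
    (hrf : readsFrom H j k x v) : j < k :=
  (hR j k x v hrf).1

theorem MVTOReadRule.le_of_commit_before {H : History} (hR : MVTOReadRule H) {j k x v i : ℕ}
    (hrf : readsFrom H j k x v) (hci : committed H i) (hwi : writesTo H i x)
    (hbefore : before H (Event.commit i) (Event.read k x v)) (hik : i < k) : i ≤ j :=
  (hR j k x v hrf).2.2 i hci hwi hbefore hik

theorem not_lt_and_lt_of_mvto {H : History} (hR : MVTOReadRule H) (hC : MVTOCommitRule H)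
    {j k x v i : ℕ} (hrf : readsFrom H j k x v) (hci : committed H i) (hwi : writesTo H i x) :
    ¬ (j < i ∧ i < k) := by
  rintro ⟨hji, hik⟩
  rcases before_or_before_of_ne hci hrf.1 Event.noConfusion with hcommit_first | hread_first
  · have := hR.le_of_commit_before hrf hci hwi hcommit_first hik
    omega
  · exact hC i x hci hwi j k v hrf hread_first ⟨hji, hik⟩

theorem mvto_write_rule_general (H : History)
    (hread : ∀ j k x v, readsFrom H j k x v →
      j < k ∧ before H (Event.commit j) (Event.read k x v) ∧
        ∀ i, committed H i → writesTo H i x →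
          before H (Event.commit i) (Event.read k x v) → i < k → i ≤ j)
    (hcommit : ∀ i x, committed H i → writesTo H i x →
      ∀ j k v, readsFrom H j k x v →
        before H (Event.read k x v) (Event.commit i) → ¬ (j < i ∧ i < k))
    {j k x v i : ℕ} (hrf : readsFrom H j k x v)
    (hci : committed H i) (hwi : writesTo H i x)
    (hij : i ≠ j) (hik : i ≠ k) :
    Xor' (i < j) (k < i) := by
  have hjk : j < k := MVTOReadRule.lt hread hrf
  have hnot_between := not_lt_and_lt_of_mvto hread hcommit hrf hci hwi
  exact xor_def.mpr (by omega)

/-- in an MVTO-generated history, if `T_k` reads `x` from the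
    committed transaction `T_j`, and `T_i` is any other committed transaction
    writing `x`, then `i < j` or `k < i` (exclusively): no committed writer of
    `x` has a timestamp strictly between `j` and `k`.
    The MVTO read rule and commit rule are taken as hypotheses. -/
theorem mvto_write_rule (H : History) (hN : H.Nodup)
    (hread : ∀ j k x v, readsFrom H j k x v →
      j < k ∧ before H (Event.commit j) (Event.read k x v) ∧
        ∀ i, committed H i → writesTo H i x →
          before H (Event.commit i) (Event.read k x v) → i < k → i ≤ j)
    (hcommit : ∀ i x, committed H i → writesTo H i x →
      ∀ j k v, readsFrom H j k x v →
        before H (Event.read k x v) (Event.commit i) → ¬ (j < i ∧ i < k))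
    {j k x v i : ℕ} (hrf : readsFrom H j k x v)
    (hci : committed H i) (hwi : writesTo H i x)
    (hij : i ≠ j) (hik : i ≠ k) :
    Xor' (i < j) (k < i) :=
  mvto_write_rule_general H hread hcommit hrf hci hwi hij hik
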